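/- Let [α_1|β_1], [α_2|β_2] ∈ S-Block(n) and set ℓ = max{len(α_1) − len(β_2), len(α_2) − len(β_1)}. Then ℓ ≥ 0, and: (i) if ℓ ≥ 2, then no element of S-Block(n) is a lower bound of both [α_1|β_1] and [α_2|β_2]; (ii) if ℓ ∈ {0, 1} and σ ∈ Dis(n) is a greatest lower bound of α_1 and α_2 in Dis(n) while ρ ∈ Dis(n) is a least upper bound of β_1 and β_2 in Dis(n), then [σ|ρ] is an S-block and is the greatest lower bound of [α_1|β_1] and [α_2|β_2] in S-Block(n); (iii) if σ' ∈ Dis(n) is a least upper bound of α_1 and α_2 in Dis(n) and ρ' ∈ Dis(n) is a greatest lower bound of β_1 and β_2 in Dis(n), then: if ρ' ⪰ σ', the pair [σ'|ρ'] is an S-block and is the least upper bound of [α_1|β_1] and [α_2|β_2] in S-Block(n), while if ρ' does not majorize σ', then no element of S-Block(n) is an upper bound of both. -/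

import Mathlib

/-!
Majorization between partitions with positive parts can only shorten them: `β ⪰ α` forces
`len β ≤ len α`. This alone gives `ℓ ≥ 0`, part (i), and the length condition for the join in
(iii). For the meet in (ii) one needs `len σ ≤ len ρ + 1`. The most balanced partition
`τ_K(n)` into `K` distinct parts is majorized by every distinct partition of `n` with at most
`K` parts, and `τ'_J(n) = (n - C(J,2), J-1, …, 1)` majorizes every one with at least `J` parts;
so `τ_K(n)` is a common lower bound of `α₁, α₂` and `τ'_J(n)` a common upper bound of `β₁, β₂`
for `K = max (len α₁) (len α₂)` and `J = min (len β₁) (len β₂)`, whence `len σ ≤ K` and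
`J ≤ len ρ`, and `ℓ ≤ 1` gives `K ≤ J + 1`. The order-theoretic parts are then formal.
-/

/-- A partition: a non-increasing list of positive integers. -/
def IsPartition (π : List ℕ) : Prop :=
  π.Pairwise (· ≥ ·) ∧ ∀ x ∈ π, 0 < x

/-- A partition of `n` into distinct positive parts, listed in (strictly) decreasing order. -/
def DisPart (n : ℕ) (γ : List ℕ) : Prop :=
  γ.Pairwise (· > ·) ∧ (∀ x ∈ γ, 0 < x) ∧ γ.sum = n

/-- A partition of `n` into exactly `k` distinct positive parts. -/
def DisPartK (n k : ℕ) (γ : List ℕ) : Prop :=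
  DisPart n γ ∧ γ.length = k

/-- `β` majorizes `α`. -/
def Majorizes (β α : List ℕ) : Prop :=
  β.sum = α.sum ∧ ∀ k ≤ min α.length β.length, (α.take k).sum ≤ (β.take k).sum

/-- α(π): the parts `d_i − i + 1` for 1-based indices `i` with `d_i ≥ i`. -/
def alphaOf (π : List ℕ) : List ℕ :=
  (List.range π.length).filterMap
    (fun i => if i + 1 ≤ π.getD i 0 then some (π.getD i 0 - i) else none)

/-- Number of boxes of the Ferrers diagram strictly below the diagonal in (1-based) column `j`. -/
def betaColCount (π : List ℕ) (j : ℕ) : ℕ :=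
  ((List.range π.length).filter (fun i => decide (j ≤ i ∧ j ≤ π.getD i 0))).length

/-- β(π): the positive column counts below the main diagonal, in decreasing order. -/
def betaOf (π : List ℕ) : List ℕ :=
  ((List.range π.length).map (fun j => betaColCount π (j + 1))).filter (fun c => c != 0)

/-- The mark (modified Durfee number) `m(π) = max {i : d_i ≥ i − 1}` (1-based indices). -/
noncomputable def mark (π : List ℕ) : ℕ :=
  sSup {i : ℕ | 1 ≤ i ∧ i ≤ π.length ∧ i ≤ π.getD (i - 1) 0 + 1}

def IsIndepSet {V : Type*} (G : SimpleGraph V) (s : Set V) : Prop :=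
  s.Pairwise (fun v w => ¬ G.Adj v w)

/-- `(K, S)` is a KS-partition of `G`. -/
def IsKS {V : Type*} [Fintype V] (G : SimpleGraph V) (K S : Finset V) : Prop :=
  (∀ v, v ∈ K ∨ v ∈ S) ∧ Disjoint K S ∧ G.IsClique (K : Set V) ∧ IsIndepSet G (S : Set V)

def IsSplit {V : Type*} [Fintype V] (G : SimpleGraph V) : Prop :=
  ∃ K S, IsKS G K S

noncomputable def cliqueNum {V : Type*} [Fintype V] (G : SimpleGraph V) : ℕ :=
  sSup {n | ∃ s : Finset V, G.IsNClique n s}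

noncomputable def indepNum {V : Type*} [Fintype V] (G : SimpleGraph V) : ℕ :=
  sSup {n | ∃ s : Finset V, IsIndepSet G (s : Set V) ∧ s.card = n}

/-- A balanced split graph: some KS-partition is simultaneously K-max and S-max. -/
def IsBalancedSplit {V : Type*} [Fintype V] (G : SimpleGraph V) : Prop :=
  IsSplit G ∧ ∃ K S, IsKS G K S ∧ K.card = cliqueNum G ∧ S.card = indepNum G

/-- An unbalanced split graph. -/
def IsUnbalancedSplit {V : Type*} [Fintype V] (G : SimpleGraph V) : Prop :=
  IsSplit G ∧ ¬ ∃ K S, IsKS G K S ∧ K.card = cliqueNum G ∧ S.card = indepNum G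

/-- `π` is the degree sequence of `G` (degrees in non-increasing order). -/
def HasDegSeq {V : Type*} [Fintype V] (G : SimpleGraph V) [DecidableRel G.Adj]
    (π : List ℕ) : Prop :=
  π.Pairwise (· ≥ ·) ∧ (π : Multiset ℕ) = Finset.univ.val.map (fun v => G.degree v)

def NoIsolated {V : Type*} [Fintype V] (G : SimpleGraph V) [DecidableRel G.Adj] : Prop :=
  ∀ v, 0 < G.degree v

def IsThreshold {V : Type*} [Fintype V] (G : SimpleGraph V) : Prop :=
  ∃ (t : ℝ) (a : V → ℝ), 0 < t ∧ (∀ v, 0 < a v) ∧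
    ∀ s : Finset V, (IsIndepSet G (s : Set V) ↔ ∑ v ∈ s, a v ≤ t)

noncomputable def chromNum {V : Type*} [Fintype V] (G : SimpleGraph V) : ℕ :=
  sInf {n | G.Colorable n}

def IsNG {V : Type*} [Fintype V] (G : SimpleGraph V) : Prop :=
  chromNum G + chromNum Gᶜ = Fintype.card V + 1

def ngA {V : Type*} [Fintype V] (G : SimpleGraph V) [DecidableRel G.Adj] : Set V :=
  {v | G.degree v = chromNum G - 1}

def IsNG1 {V : Type*} [Fintype V] (G : SimpleGraph V) [DecidableRel G.Adj] : Prop :=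
  IsNG G ∧ G.IsClique (ngA G)

def IsNG2 {V : Type*} [Fintype V] (G : SimpleGraph V) [DecidableRel G.Adj] : Prop :=
  IsNG G ∧ IsIndepSet G (ngA G)

def IsNG3 {V : Type*} [Fintype V] (G : SimpleGraph V) [DecidableRel G.Adj] : Prop :=
  IsNG G ∧ Nonempty ((G.induce (ngA G)) ≃g SimpleGraph.cycleGraph 5)

/-- `[α|β]` is an S-block for the integer `n`. -/
def IsSBlock (n : ℕ) (α β : List ℕ) : Prop :=
  DisPart n α ∧ DisPart n β ∧ Majorizes β α ∧
    (α.length = β.length ∨ α.length = β.length + 1)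

/-- `[α₁|β₁] ⪰ [α₂|β₂]` in the block order. -/
def BlockMaj (α₁ β₁ α₂ β₂ : List ℕ) : Prop :=
  Majorizes α₁ α₂ ∧ Majorizes β₂ β₁

/-- τ'_k(n) = (n − C(k,2), k−1, k−2, …, 2, 1). -/
def tauMax (n k : ℕ) : List ℕ :=
  (n - Nat.choose k 2) :: ((List.range (k - 1)).reverse.map (· + 1))

/-- τ_k(n): parts (k−i+1)+q+1 for 1 ≤ i ≤ r and (k−i+1)+q for r < i ≤ k,
where n − C(k+1,2) = qk + r, 0 ≤ r < k. -/
def tauMin (n k : ℕ) : List ℕ :=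
  (List.range k).map
    (fun i => (k - i) + (n - Nat.choose (k + 1) 2) / k +
      (if i < (n - Nat.choose (k + 1) 2) % k then 1 else 0))

/-- `β` covers `α` in `Dis(n)`. -/
def CoversDis (n : ℕ) (β α : List ℕ) : Prop :=
  DisPart n α ∧ DisPart n β ∧ Majorizes β α ∧ β ≠ α ∧
    ¬ ∃ γ, DisPart n γ ∧ Majorizes β γ ∧ Majorizes γ α ∧ γ ≠ α ∧ γ ≠ β

/-- `[α₁|β₁]` covers `[α₂|β₂]` in `S-Block(n)`. -/
def BlockCovers (n : ℕ) (α₁ β₁ α₂ β₂ : List ℕ) : Prop :=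
  IsSBlock n α₁ β₁ ∧ IsSBlock n α₂ β₂ ∧ BlockMaj α₁ β₁ α₂ β₂ ∧ ¬(α₁ = α₂ ∧ β₁ = β₂) ∧
    ¬ ∃ α β, IsSBlock n α β ∧ BlockMaj α₁ β₁ α β ∧ BlockMaj α β α₂ β₂ ∧
      ¬(α = α₁ ∧ β = β₁) ∧ ¬(α = α₂ ∧ β = β₂)

/-- `[α|β]` is a threshold-covered block: member of TC(n). -/
def InTC (n : ℕ) (α β : List ℕ) : Prop :=
  IsSBlock n α β ∧ CoversDis n β α

def IsLubDis (n : ℕ) (a b c : List ℕ) : Prop :=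
  Majorizes c a ∧ Majorizes c b ∧
    ∀ d, DisPart n d → Majorizes d a → Majorizes d b → Majorizes d c

def IsGlbDis (n : ℕ) (a b c : List ℕ) : Prop :=
  Majorizes a c ∧ Majorizes b c ∧
    ∀ d, DisPart n d → Majorizes a d → Majorizes b d → Majorizes c d

theorem Majorizes.length_le {β α : List ℕ} (h : Majorizes β α) (hβ : ∀ x ∈ β, 0 < x) :
    β.length ≤ α.length := by
  by_contra! hlt
  have htake := h.2 α.length (le_min le_rfl hlt.le)
  rw [List.take_of_length_le le_rfl] at htake
  have hdrop : 0 < (β.drop α.length).sum :=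
    List.sum_pos _ (fun x hx => hβ x (List.mem_of_mem_drop hx)) (by simpa using hlt)
  have hsplit := List.sum_take_add_sum_drop β α.length
  have hsum := h.1
  omega

theorem Majorizes.trans {γ β α : List ℕ} (h₁ : Majorizes γ β) (h₂ : Majorizes β α) :
    Majorizes γ α := by
  refine ⟨h₁.1.trans h₂.1, fun k hk => ?_⟩
  rcases le_or_gt k β.length with hkβ | hβk
  · exact (h₂.2 k (by omega)).trans (h₁.2 k (by omega))
  · calc (α.take k).sum ≤ (α.take α.length).sum := List.monotone_sum_take α (by omega)
      _ = (β.take β.length).sum := by simp only [List.take_length, h₂.1]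
      _ ≤ (γ.take β.length).sum := h₁.2 _ (by omega)
      _ ≤ (γ.take k).sum := List.monotone_sum_take γ hβk.le

theorem majorizes_of_sum_drop_le {β α : List ℕ} (hsum : β.sum = α.sum)
    (h : ∀ k ≤ min α.length β.length, (β.drop k).sum ≤ (α.drop k).sum) : Majorizes β α := by
  refine ⟨hsum, fun k hk => ?_⟩
  have := h k hk
  have := List.sum_take_add_sum_drop α k
  have := List.sum_take_add_sum_drop β k
  omega

theorem add_length_lt_of_pairwise_gt {a x : ℕ} {L : List ℕ} (hL : (x :: L).Pairwise (· > ·))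
    (ha : ∀ y ∈ x :: L, a < y) : a + L.length < x := by
  classical
  have hsub : L.toFinset ⊆ Finset.Ioo a x := fun y hy => by
    rw [List.mem_toFinset] at hy
    exact Finset.mem_Ioo.2 ⟨ha y (List.mem_cons_of_mem x hy), List.rel_of_pairwise_cons hL hy⟩
  have hcard := Finset.card_le_card hsub
  rw [List.toFinset_card_of_nodup hL.of_cons.nodup, Nat.card_Ioo] at hcard
  have := ha x List.mem_cons_self
  omega

theorem two_mul_sum_ge_of_pairwise_gt {a : ℕ} {L : List ℕ} (hL : L.Pairwise (· > ·))
    (ha : ∀ x ∈ L, a < x) : 2 * a * L.length + L.length * (L.length + 1) ≤ 2 * L.sum := by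
  induction L with
  | nil => simp
  | cons x L ih =>
    have hx := add_length_lt_of_pairwise_gt hL ha
    have hL' := ih hL.of_cons fun y hy => ha y (List.mem_cons_of_mem x hy)
    simp only [List.sum_cons, List.length_cons]
    nlinarith

theorem two_mul_sum_le_of_pairwise_gt {b : ℕ} {L : List ℕ} (hL : L.Pairwise (· > ·))
    (hb : ∀ x ∈ L, x < b) : 2 * L.sum + L.length * (L.length + 1) ≤ 2 * b * L.length := by
  induction L generalizing b with
  | nil => simp
  | cons x L ih =>
    have hx := hb x List.mem_cons_self
    have hL' := ih hL.of_cons fun y hy => List.rel_of_pairwise_cons hL hy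
    simp only [List.sum_cons, List.length_cons]
    nlinarith

theorem DisPart.length_mul_succ_le {n : ℕ} {γ : List ℕ} (h : DisPart n γ) :
    γ.length * (γ.length + 1) ≤ 2 * n := by
  have := two_mul_sum_ge_of_pairwise_gt h.1 h.2.1
  rw [h.2.2] at this
  omega

theorem DisPart.eq_nil_of_zero {γ : List ℕ} (h : DisPart 0 γ) : γ = [] := by
  by_contra hne
  exact (List.sum_pos γ h.2.1 hne).ne' h.2.2

theorem two_mul_choose_two_succ (m : ℕ) : 2 * (m + 1).choose 2 = m * (m + 1) := by
  have heven : Even ((m + 1) * m) := Nat.mul_comm m (m + 1) ▸ Nat.even_mul_succ_self m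
  rw [Nat.choose_two_right, Nat.add_sub_cancel, Nat.two_mul_div_two_of_even heven, Nat.mul_comm]

section tauMin

variable {n K : ℕ}

theorem tauMin_length : (tauMin n K).length = K := by simp [tauMin]

theorem tauMin_pairwise_gt : (tauMin n K).Pairwise (· > ·) := by
  rw [tauMin, List.pairwise_iff_getElem]
  intro i j hi hj hij
  simp only [List.length_map, List.length_range] at hi hj
  simp only [List.getElem_map, List.getElem_range]
  split_ifs <;> omega

theorem tauMin_pos : ∀ x ∈ tauMin n K, 0 < x := by
  simp only [tauMin, List.mem_map, List.mem_range]
  rintro _ ⟨i, hi, rfl⟩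
  generalize (n - (K + 1).choose 2) / K = q
  omega

theorem two_mul_sum_take_tauMin {k : ℕ} (hk : k ≤ K) :
    2 * ((tauMin n K).take k).sum + k * k =
      k * (2 * K + 1) + 2 * k * ((n - (K + 1).choose 2) / K) +
        2 * min k ((n - (K + 1).choose 2) % K) := by
  rw [tauMin, ← List.map_take, List.take_range, min_eq_left hk]
  generalize (n - (K + 1).choose 2) / K = q
  generalize (n - (K + 1).choose 2) % K = r
  induction k with
  | zero => simp
  | succ k ih =>
    rw [List.sum_range_succ]
    have := ih (by omega)
    split_ifs <;> grind

theorem tauMin_sum (hK : 0 < K) (hn : K * (K + 1) ≤ 2 * n) : (tauMin n K).sum = n := by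
  have hsum := two_mul_sum_take_tauMin (n := n) (le_refl K)
  rw [List.take_of_length_le tauMin_length.le] at hsum
  have hchoose := two_mul_choose_two_succ K
  have hdiv := Nat.div_add_mod (n - (K + 1).choose 2) K
  have hmod := Nat.mod_lt (n - (K + 1).choose 2) hK
  rw [min_eq_right hmod.le] at hsum
  have hle : (K + 1).choose 2 ≤ n := by omega
  zify [hle] at hsum hchoose hdiv hn ⊢
  linarith

theorem tauMin_disPart (hK : 0 < K) (hn : K * (K + 1) ≤ 2 * n) : DisPart n (tauMin n K) :=
  ⟨tauMin_pairwise_gt, tauMin_pos, tauMin_sum hK hn⟩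

end tauMin

theorem getElem_lt_of_mem_take {δ : List ℕ} (hδ : δ.Pairwise (· > ·)) {k : ℕ}
    (hk : k < δ.length) : ∀ x ∈ δ.take k, δ[k] < x := by
  rw [← List.take_append_drop k δ, List.pairwise_append] at hδ
  have hmem : δ[k] ∈ δ.drop k := by rw [List.drop_eq_getElem_cons hk]; exact List.mem_cons_self
  exact fun x hx => hδ.2.2 x hx _ hmem

theorem le_getElem_of_mem_drop {δ : List ℕ} (hδ : δ.Pairwise (· > ·)) {k : ℕ}
    (hk : k < δ.length) : ∀ x ∈ δ.drop k, x ≤ δ[k] := by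
  have hdrop := List.drop_eq_getElem_cons hk
  have hpw : (δ.drop k).Pairwise (· > ·) := hδ.sublist (List.drop_sublist k δ)
  rw [hdrop] at hpw ⊢
  intro x hx
  rcases List.mem_cons.1 hx with rfl | hx
  · exact le_rfl
  · exact (List.rel_of_pairwise_cons hpw hx).le

theorem two_mul_sum_take_ge_of_pairwise_gt {δ : List ℕ} (hδ : δ.Pairwise (· > ·)) {k : ℕ}
    (hk : k < δ.length) : 2 * δ[k] * k + k * (k + 1) ≤ 2 * (δ.take k).sum := by
  have := two_mul_sum_ge_of_pairwise_gt (hδ.sublist (List.take_sublist k δ))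
    (getElem_lt_of_mem_take hδ hk)
  rwa [List.length_take, min_eq_left hk.le] at this

theorem two_mul_sum_drop_le_of_pairwise_gt {δ : List ℕ} (hδ : δ.Pairwise (· > ·)) {k : ℕ}
    (hk : k < δ.length) :
    2 * (δ.drop k).sum + (δ.length - k) * (δ.length - k + 1) ≤
      2 * (δ[k] + 1) * (δ.length - k) := by
  have := two_mul_sum_le_of_pairwise_gt (hδ.sublist (List.drop_sublist k δ))
    fun x hx => Nat.lt_succ_of_le (le_getElem_of_mem_drop hδ hk x hx)
  rwa [List.length_drop] at this

theorem majorizes_tauMin {n K : ℕ} {δ : List ℕ} (hδ : DisPart n δ) (hK : 0 < K)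
    (hn : K * (K + 1) ≤ 2 * n) (hlen : δ.length ≤ K) : Majorizes δ (tauMin n K) := by
  refine ⟨hδ.2.2.trans (tauMin_sum hK hn).symm, fun k hk => ?_⟩
  rw [tauMin_length] at hk
  rcases (le_min_iff.1 hk).2.eq_or_lt with rfl | hkδ
  · calc ((tauMin n K).take δ.length).sum ≤ ((tauMin n K).take K).sum :=
          List.monotone_sum_take _ hlen
      _ = δ.sum := by
          rw [List.take_of_length_le tauMin_length.le, tauMin_sum hK hn, hδ.2.2]
      _ = (δ.take δ.length).sum := by rw [List.take_length]
  have hτ := two_mul_sum_take_tauMin (n := n) (K := K) (k := k) (by omega)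
  have hchoose := two_mul_choose_two_succ K
  have hle : (K + 1).choose 2 ≤ n := by omega
  have hdiv : K * ((n - (K + 1).choose 2) / K) + (n - (K + 1).choose 2) % K + (K + 1).choose 2 = n := by
    rw [Nat.div_add_mod]; omega
  generalize (n - (K + 1).choose 2) / K = q at hτ hdiv
  generalize (n - (K + 1).choose 2) % K = r at hτ hdiv
  have hsplit := List.sum_take_add_sum_drop δ k
  rw [hδ.2.2] at hsplit
  have hhead := two_mul_sum_take_ge_of_pairwise_gt hδ.1 hkδ
  have htail := two_mul_sum_drop_le_of_pairwise_gt hδ.1 hkδ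
  generalize δ[k] = a at hhead htail
  obtain ⟨p, hp⟩ : ∃ p, δ.length = k + p := ⟨δ.length - k, by omega⟩
  rw [hp, Nat.add_sub_cancel_left] at htail
  obtain ⟨e, rfl⟩ : ∃ e, K = k + p + e := ⟨K - k - p, by omega⟩
  have hmin := min_le_left k r
  have hmin' := min_le_right k r
  generalize min k r = μ at hτ hmin hmin'
  suffices 2 * ((tauMin n (k + p + e)).take k).sum ≤ 2 * (δ.take k).sum by omega
  -- If `a = δ[k]` is at most `K - k + q`, the `p` parts of `δ` from `a` on are small enough;
  -- otherwise the first `k` parts of `δ`, all above `a`, are large enough.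
  rcases le_or_gt a (p + e + q) with ha | ha
  · nlinarith [Nat.mul_le_mul_right p ha, Nat.zero_le (e * e), Nat.zero_le (e * q)]
  · nlinarith [Nat.mul_le_mul_right k ha]

theorem sum_map_range_succ (m : ℕ) : ((List.range m).map (· + 1)).sum = (m + 1).choose 2 := by
  induction m with
  | zero => rfl
  | succ m ih => rw [List.sum_range_succ, ih, Nat.choose_succ_succ' (m + 1), Nat.choose_one_right,
      Nat.add_comm]

section tauMax

variable {n J : ℕ}

theorem tauMax_length (hJ : 0 < J) : (tauMax n J).length = J := by
  simp only [tauMax, List.length_cons, List.length_map, List.length_reverse, List.length_range]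
  omega

theorem tauMax_head_ge (hn : J * (J + 1) ≤ 2 * n) : J ≤ n - J.choose 2 := by
  have hsucc : (J + 1).choose 2 = J + J.choose 2 :=
    (Nat.choose_succ_succ' J 1).trans (by rw [Nat.choose_one_right])
  have := two_mul_choose_two_succ J
  omega

theorem tauMax_pairwise_gt (hn : J * (J + 1) ≤ 2 * n) : (tauMax n J).Pairwise (· > ·) := by
  have hhead := tauMax_head_ge hn
  simp only [tauMax, List.pairwise_cons, List.mem_map, List.mem_reverse, List.mem_range,
    List.pairwise_map, List.pairwise_reverse]
  refine ⟨?_, List.pairwise_lt_range.imp fun h => by omega⟩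
  rintro _ ⟨i, hi, rfl⟩
  omega

theorem tauMax_pos (hJ : 0 < J) (hn : J * (J + 1) ≤ 2 * n) : ∀ x ∈ tauMax n J, 0 < x := by
  have hhead := tauMax_head_ge hn
  simp only [tauMax, List.mem_cons, List.mem_map, List.mem_reverse, List.mem_range]
  rintro _ (rfl | ⟨i, hi, rfl⟩) <;> omega

theorem sum_drop_succ_tauMax (j i : ℕ) :
    ((tauMax n (j + 1)).drop (i + 1)).sum = (j - i + 1).choose 2 := by
  rw [tauMax, List.drop_succ_cons, ← List.map_drop, List.drop_reverse, List.take_range,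
    List.length_range, List.map_reverse, List.sum_reverse, Nat.add_sub_cancel,
    min_eq_left (Nat.sub_le j i), sum_map_range_succ]

theorem tauMax_sum (hJ : 0 < J) (hn : J * (J + 1) ≤ 2 * n) : (tauMax n J).sum = n := by
  obtain ⟨j, rfl⟩ : ∃ j, J = j + 1 := ⟨J - 1, by omega⟩
  have htail := sum_map_range_succ (m := j)
  have hhead := tauMax_head_ge hn
  simp only [tauMax, List.sum_cons, List.map_reverse, List.sum_reverse, Nat.add_sub_cancel, htail]
  omega

theorem tauMax_disPart (hJ : 0 < J) (hn : J * (J + 1) ≤ 2 * n) : DisPart n (tauMax n J) :=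
  ⟨tauMax_pairwise_gt hn, tauMax_pos hJ hn, tauMax_sum hJ hn⟩

end tauMax

theorem majorizes_tauMax {n J : ℕ} {β : List ℕ} (hβ : DisPart n β) (hJ : 0 < J)
    (hn : J * (J + 1) ≤ 2 * n) (hlen : J ≤ β.length) : Majorizes (tauMax n J) β := by
  refine majorizes_of_sum_drop_le ((tauMax_sum hJ hn).trans hβ.2.2.symm) fun k hk => ?_
  rw [tauMax_length hJ] at hk
  obtain ⟨j, rfl⟩ : ∃ j, J = j + 1 := ⟨J - 1, by omega⟩
  rcases k with _ | i
  · rw [List.drop_zero, List.drop_zero, tauMax_sum hJ hn, hβ.2.2]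
  rw [sum_drop_succ_tauMax]
  have hdrop := two_mul_sum_ge_of_pairwise_gt (a := 0) (hβ.1.sublist (List.drop_sublist (i + 1) β))
    fun x hx => hβ.2.1 x (List.mem_of_mem_drop hx)
  rw [List.length_drop] at hdrop
  have hchoose := two_mul_choose_two_succ (j - i)
  have hmono : (j - i) * (j - i + 1) ≤ (β.length - (i + 1)) * (β.length - (i + 1) + 1) :=
    Nat.mul_le_mul (by omega) (by omega)
  omega

theorem IsGlbDis.length_le_max {n : ℕ} {α₁ α₂ σ : List ℕ} (h : IsGlbDis n α₁ α₂ σ)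
    (hα₁ : DisPart n α₁) (hα₂ : DisPart n α₂) (hσ : DisPart n σ) :
    σ.length ≤ max α₁.length α₂.length := by
  rcases Nat.eq_zero_or_pos n with rfl | hn
  · simp [hσ.eq_nil_of_zero]
  set K := max α₁.length α₂.length with hKdef
  have hK : 0 < K := lt_max_of_lt_left (List.length_pos_of_ne_nil fun hnil =>
    hn.ne' (hα₁.2.2.symm.trans (by rw [hnil, List.sum_nil])))
  have hKn : K * (K + 1) ≤ 2 * n := by
    rcases max_choice α₁.length α₂.length with hmax | hmax <;> rw [hKdef, hmax]
    exacts [hα₁.length_mul_succ_le, hα₂.length_mul_succ_le]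
  have hσK := (h.2.2 _ (tauMin_disPart hK hKn) (majorizes_tauMin hα₁ hK hKn (le_max_left _ _))
    (majorizes_tauMin hα₂ hK hKn (le_max_right _ _))).length_le hσ.2.1
  rwa [tauMin_length] at hσK

theorem IsLubDis.min_length_le {n : ℕ} {β₁ β₂ ρ : List ℕ} (h : IsLubDis n β₁ β₂ ρ)
    (hβ₁ : DisPart n β₁) (hβ₂ : DisPart n β₂) : min β₁.length β₂.length ≤ ρ.length := by
  set J := min β₁.length β₂.length
  rcases Nat.eq_zero_or_pos J with hJ | hJ
  · omega
  have hJn : J * (J + 1) ≤ 2 * n :=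
    (Nat.mul_le_mul (min_le_left _ _) (Nat.succ_le_succ (min_le_left _ _))).trans
      hβ₁.length_mul_succ_le
  have hτ := tauMax_disPart hJ hJn
  have hJρ := (h.2.2 _ hτ (majorizes_tauMax hβ₁ hJ hJn (min_le_left _ _))
    (majorizes_tauMax hβ₂ hJ hJn (min_le_right _ _))).length_le hτ.2.1
  rwa [tauMax_length hJ] at hJρ

/-- meets and joins in S-Block(n) ∪ {0̂, 1̂}. -/
theorem stmt18 (n : ℕ) (α₁ β₁ α₂ β₂ : List ℕ)
    (h₁ : IsSBlock n α₁ β₁) (h₂ : IsSBlock n α₂ β₂)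
    (ℓ : ℤ) (hℓ : ℓ = max ((α₁.length : ℤ) - (β₂.length : ℤ))
      ((α₂.length : ℤ) - (β₁.length : ℤ))) :
    (0 ≤ ℓ) ∧
    (2 ≤ ℓ → ¬ ∃ σ ρ, IsSBlock n σ ρ ∧ BlockMaj α₁ β₁ σ ρ ∧ BlockMaj α₂ β₂ σ ρ) ∧
    ((ℓ = 0 ∨ ℓ = 1) → ∀ σ ρ, DisPart n σ → IsGlbDis n α₁ α₂ σ →
        DisPart n ρ → IsLubDis n β₁ β₂ ρ →
          IsSBlock n σ ρ ∧ BlockMaj α₁ β₁ σ ρ ∧ BlockMaj α₂ β₂ σ ρ ∧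
            ∀ σ' ρ', IsSBlock n σ' ρ' → BlockMaj α₁ β₁ σ' ρ' → BlockMaj α₂ β₂ σ' ρ' →
              BlockMaj σ ρ σ' ρ') ∧
    (∀ σ' ρ', DisPart n σ' → IsLubDis n α₁ α₂ σ' → DisPart n ρ' → IsGlbDis n β₁ β₂ ρ' →
        (Majorizes ρ' σ' →
            IsSBlock n σ' ρ' ∧ BlockMaj σ' ρ' α₁ β₁ ∧ BlockMaj σ' ρ' α₂ β₂ ∧
              ∀ σ'' ρ'', IsSBlock n σ'' ρ'' → BlockMaj σ'' ρ'' α₁ β₁ →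
                BlockMaj σ'' ρ'' α₂ β₂ → BlockMaj σ'' ρ'' σ' ρ') ∧
          (¬ Majorizes ρ' σ' →
            ¬ ∃ σ ρ, IsSBlock n σ ρ ∧ BlockMaj σ ρ α₁ β₁ ∧ BlockMaj σ ρ α₂ β₂)) := by
  have hlen₁ := h₁.2.2.2
  have hlen₂ := h₂.2.2.2
  refine ⟨by omega, ?_, ?_, ?_⟩
  · rintro hℓ2 ⟨σ, ρ, hσρ, hb₁, hb₂⟩
    have := hb₁.1.length_le h₁.1.2.1
    have := hb₂.1.length_le h₂.1.2.1
    have := hb₁.2.length_le hσρ.2.1.2.1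
    have := hb₂.2.length_le hσρ.2.1.2.1
    have := hσρ.2.2.2
    omega
  · intro hℓ01 σ ρ hσ hglb hρ hlub
    have hρσ : Majorizes ρ σ := (hlub.1.trans h₁.2.2.1).trans hglb.1
    have hσlen := hglb.length_le_max h₁.1 h₂.1 hσ
    have hρlen := hlub.min_length_le h₁.2.1 h₂.2.1
    have hlen := hρσ.length_le hρ.2.1
    refine ⟨⟨hσ, hρ, hρσ, by omega⟩, ⟨hglb.1, hlub.1⟩, ⟨hglb.2.1, hlub.2.1⟩,
      fun σ' ρ' h' hb₁ hb₂ => ⟨hglb.2.2 σ' h'.1 hb₁.1 hb₂.1, hlub.2.2 ρ' h'.2.1 hb₁.2 hb₂.2⟩⟩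
  · intro σ' ρ' hσ' hlub hρ' hglb
    refine ⟨fun hρσ => ?_, ?_⟩
    · have := hρσ.length_le hρ'.2.1
      have := hlub.1.length_le hσ'.2.1
      have := hglb.1.length_le h₁.2.1.2.1
      refine ⟨⟨hσ', hρ', hρσ, by omega⟩, ⟨hlub.1, hglb.1⟩, ⟨hlub.2.1, hglb.2.1⟩,
        fun σ ρ h hb₁ hb₂ => ⟨hlub.2.2 σ h.1 hb₁.1 hb₂.1, hglb.2.2 ρ h.2.1 hb₁.2 hb₂.2⟩⟩
    · rintro hnot ⟨σ, ρ, hσρ, hb₁, hb₂⟩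
      exact hnot (((hglb.2.2 ρ hσρ.2.1 hb₁.2 hb₂.2).trans hσρ.2.2.1).trans
        (hlub.2.2 σ hσρ.1 hb₁.1 hb₂.1))
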